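/- arXiv:2407.00860 — 5 statements merged into one kernel-verified Lean document; each statement's English description precedes it below -/
import Mathlib

section
/- Let g ≥ 1 and r ≥ 1 be natural numbers, and let a₁, …, a_g be natural numbers with 0 ≤ aᵢ < r for all i. If ∑_{i=1}^{g} cos(2π aᵢ / r) ≤ 1, then ∑_{i=1}^{g} aᵢ ≥ 13·r·(g − 1)/(20π) (as an inequality of real numbers). -/
lemma cos_ge_linear {x : ℝ} (hx : 0 ≤ x) : Real.cos x ≥ 1 - (10/13) * x := by
  rcases le_or_gt x (20/13) with h1 | h1
  · have := Real.one_sub_sq_div_two_le_cos (x := x)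
    nlinarith
  rcases le_or_gt x (Real.pi/2) with h2 | h2
  · have : 0 ≤ Real.cos x := Real.cos_nonneg_of_mem_Icc ⟨by linarith, h2⟩
    nlinarith
  rcases le_or_gt x (22/10) with h2' | h2'
  · have hpi : Real.pi > 3.141592 := Real.pi_gt_d6
    have hle : Real.sin (x - Real.pi/2) ≤ x - Real.pi/2 := Real.sin_le (by linarith)
    have hcs : Real.cos x = - Real.sin (x - Real.pi/2) := by
      rw [Real.sin_sub]
      simp [Real.sin_pi_div_two, Real.cos_pi_div_two]
    nlinarith
  rcases le_or_gt x (26/10) with h3 | h3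
  · have hpi : Real.pi > 3.141592 := Real.pi_gt_d6
    have hpi2 : Real.pi < 3.1416 := Real.pi_lt_d6.trans (by norm_num)
    set y := Real.pi - x with hy
    clear_value y
    have hy0 : 0 ≤ y := by nlinarith
    have hy1 : y ≤ 1 := by nlinarith
    have hb := Real.cos_bound (x := y) (by rw [abs_of_nonneg hy0]; exact hy1)
    rw [abs_of_nonneg hy0] at hb
    have hub : Real.cos y ≤ 1 - y^2/2 + y^4 * (5/96) := by
      have := (abs_sub_le_iff.1 hb).1
      linarith
    have hcs : Real.cos y = - Real.cos x := by rw [hy]; exact Real.cos_pi_sub x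
    have hysq : y^2 ≤ 1 := by nlinarith
    have hy4 : y^4 ≤ y^2 := by nlinarith [sq_nonneg y, sq_nonneg (y^2)]
    have key : (43/96:ℝ)*y^2 - (10/13)*y + (43/96)*(480/559)^2 ≥ 0 := by
      nlinarith [sq_nonneg (y - 480/559)]
    have hconst : (43/96:ℝ)*(480/559)^2 ≤ (10/13)*Real.pi - 2 := by nlinarith
    linarith
  · have := Real.neg_one_le_cos x
    nlinarith

theorem sum_eigenexponents_lower_bound
    (g r : ℕ) (hg : 1 ≤ g) (hr : 1 ≤ r) (a : Fin g → ℕ) (ha : ∀ i, a i < r)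
    (hcos : ∑ i, Real.cos (2 * Real.pi * (a i) / r) ≤ 1) :
    (∑ i, (a i : ℝ)) ≥ 13 * r * ((g : ℝ) - 1) / (20 * Real.pi) := by
  have hπ : (0:ℝ) < Real.pi := Real.pi_pos
  have hr' : (0:ℝ) < r := by exact_mod_cast hr
  have hg' : (1:ℝ) ≤ g := by exact_mod_cast hg
  have h1 : ∑ i : Fin g, ((1:ℝ) - (10/13)*(2*Real.pi*(a i)/r)) ≤ 1 := by
    refine le_trans (Finset.sum_le_sum fun i _ => ?_) hcos
    exact cos_ge_linear (by positivity)
  rw [Finset.sum_sub_distrib, Finset.sum_const, Finset.card_univ, Fintype.card_fin,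
    nsmul_eq_mul, mul_one] at h1
  have e : ∑ i : Fin g, (10/13)*(2*Real.pi*(a i)/r) = (20*Real.pi/(13*r))*∑ i, (a i:ℝ) := by
    rw [Finset.mul_sum]
    exact Finset.sum_congr rfl fun i _ => by field_simp; ring
  rw [e] at h1
  rw [ge_iff_le, div_le_iff₀ (by positivity)]
  have hS : (0:ℝ) ≤ ∑ i, (a i:ℝ) := Finset.sum_nonneg fun i _ => by positivity
  have h2 : (g:ℝ)*r - r ≤ (20*Real.pi/13)*∑ i, (a i:ℝ) := by
    have := mul_le_mul_of_nonneg_left h1 hr'.le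
    calc (g:ℝ)*r - r = r*((g:ℝ) - 1) := by ring
    _ ≤ r*((20*Real.pi/(13*r))*∑ i, (a i:ℝ)) := by nlinarith
    _ = (20*Real.pi/13)*∑ i, (a i:ℝ) := by field_simp
  nlinarith
end

section
/- Let g ≥ 6 and r ≥ 1 be natural numbers, and let a₁, …, a_g be natural numbers with 0 ≤ aᵢ < r for all i. If ∑_{i=1}^{g} cos(2π aᵢ / r) ≤ 1, then ∑_{i=1}^{g} aᵢ > r. -/
/-!
On `[0, ∞)` the cosine stays above the line `1 - (10/13) θ`: near `0` this follows from
`1 - θ² / 2 ≤ cos θ`, near `π` from the Taylor bound `cos u ≤ 1 - u² / 2 + u⁴ / 24` at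
`u = π - θ`, and beyond `π` the line is already below `-1`. Summing over the angles
`θᵢ = 2π aᵢ / r` turns `∑ cos θᵢ ≤ 1` into `13 r (g - 1) ≤ 20 π ∑ aᵢ`, and for `g ≥ 6`
this exceeds `r` because `65 / 20 > π`.
-/

open Real

namespace Real

lemma cos_le_one_sub_sq_div_two_add_pow_four_div (x : ℝ) :
    cos x ≤ 1 - x ^ 2 / 2 + x ^ 4 / 24 := by
  wlog hx : 0 ≤ x
  · simpa [show (-x) ^ 4 = x ^ 4 by ring] using this (-x) (by linarith)
  let f (t : ℝ) : ℝ := 1 - t ^ 2 / 2 + t ^ 4 / 24 - cos t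
  have hderiv (t : ℝ) : deriv f t = sin t - (t - t ^ 3 / 6) := by
    simp (disch := fun_prop) only [f, deriv_fun_sub, deriv_fun_add, deriv_const',
      deriv_div_const, deriv_fun_pow, deriv_id'', deriv_cos']
    ring
  have hmono : MonotoneOn f (Set.Ici 0) := by
    apply monotoneOn_of_deriv_nonneg (convex_Ici 0) (by fun_prop) (by fun_prop)
    intro t ht
    rw [interior_Ici] at ht
    rw [hderiv]
    exact sub_nonneg.2 (sin_gt_sub_cube ht).le
  have h0 : f 0 ≤ f x := hmono Set.self_mem_Ici hx hx
  norm_num [f] at h0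
  linarith

lemma one_sub_mul_le_cos_of_nonneg {x : ℝ} (hx : 0 ≤ x) : 1 - 10 / 13 * x ≤ cos x := by
  have hπ := pi_gt_d2
  rcases le_or_gt x (20 / 13) with hx₁ | hx₁
  · nlinarith [one_sub_sq_div_two_le_cos (x := x)]
  rcases le_or_gt x π with hx₂ | hx₂
  · set u := π - x with hu
    have hu₀ : 0 ≤ u := by linarith
    have hu₁ : u ^ 2 ≤ 13 / 5 := by nlinarith [pi_lt_d2]
    have hcos : cos x = -cos u := by rw [hu, cos_pi_sub, neg_neg]
    -- with `u⁴ ≤ (13/5) u²` the remaining quadratic in `u` has negative discriminant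
    nlinarith [cos_le_one_sub_sq_div_two_add_pow_four_div u,
      mul_le_mul_of_nonneg_left hu₁ (sq_nonneg u), sq_nonneg (u - 1)]
  · nlinarith [neg_one_le_cos x]

end Real

lemma card_sub_one_le_sum_of_sum_cos_le_one {ι : Type*} [Fintype ι] (x : ι → ℝ)
    (hx : ∀ i, 0 ≤ x i) (hcos : ∑ i, cos (x i) ≤ 1) :
    13 * ((Fintype.card ι : ℝ) - 1) ≤ 10 * ∑ i, x i := by
  have hlin : ∑ i, (1 - 10 / 13 * x i) ≤ 1 :=
    (Finset.sum_le_sum fun i _ ↦ one_sub_mul_le_cos_of_nonneg (hx i)).trans hcos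
  rw [Finset.sum_sub_distrib, ← Finset.mul_sum] at hlin
  simp only [Finset.sum_const, Finset.card_univ, nsmul_eq_mul, mul_one] at hlin
  linarith

theorem sum_eigenexponents_gt_order_general
    (g r : ℕ) (hg : 6 ≤ g) (hr : 1 ≤ r) (a : Fin g → ℕ)
    (hcos : ∑ i, Real.cos (2 * Real.pi * (a i) / r) ≤ 1) :
    (∑ i, a i) > r := by
  have hr₀ : (0 : ℝ) < r := by exact_mod_cast hr
  have hg₆ : (6 : ℝ) ≤ g := by exact_mod_cast hg
  have hest := card_sub_one_le_sum_of_sum_cos_le_one _ (fun i ↦ by positivity) hcos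
  rw [Fintype.card_fin, ← Finset.sum_div, ← Finset.mul_sum, mul_div_assoc',
    le_div_iff₀ hr₀] at hest
  have hsum : (r : ℝ) < ∑ i, (a i : ℝ) := by
    refine lt_of_mul_lt_mul_left ?_ (by positivity : (0 : ℝ) ≤ 20 * π)
    calc 20 * π * r < 65 * r := by nlinarith [pi_lt_d2]
      _ ≤ 13 * (g - 1) * r := by nlinarith
      _ ≤ 20 * π * ∑ i, (a i : ℝ) := by linarith
  exact_mod_cast hsum

theorem sum_eigenexponents_gt_order
    (g r : ℕ) (hg : 6 ≤ g) (hr : 1 ≤ r) (a : Fin g → ℕ) (ha : ∀ i, a i < r)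
    (hcos : ∑ i, Real.cos (2 * Real.pi * (a i) / r) ≤ 1) :
    (∑ i, a i) > r :=
  sum_eigenexponents_gt_order_general g r hg hr a hcos
end

section
/- Let ζ = exp(2πi/8) ∈ ℂ. There do not exist natural numbers f₁, f₃, f₅, f₇ such that 1 + ζ + ζ² + ζ³ = 1 + f₁·ζ/(1 − ζ) + f₃·ζ³/(1 − ζ³) + f₅·ζ⁵/(1 − ζ⁵) + f₇·ζ⁷/(1 − ζ⁷). -/
/-!
For `‖z‖ = 1`, `z ≠ 1`, the number `z / (1 - z) + 1 / 2 = (1 + z) / (2 (1 - z))` is purely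
imaginary, so every term `ζ ^ k / (1 - ζ ^ k)` on the right has real part `-1/2`. The left side
is `1 + (1 + √2) i`, so comparing real parts forces `f₁ + f₃ + f₅ + f₇ = 0`, and then the
imaginary parts `1 + √2` and `0` disagree.
-/

open Complex

lemma re_div_one_sub_of_norm_eq_one {z : ℂ} (hz : ‖z‖ = 1) (h1 : z ≠ 1) :
    (z / (1 - z)).re = -1 / 2 := by
  have hsq : z.re * z.re + z.im * z.im = 1 := by
    rw [← normSq_apply, normSq_eq_norm_sq, hz, one_pow]
  have hden : normSq (1 - z) ≠ 0 := normSq_eq_zero.not.2 (sub_ne_zero.2 h1.symm)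
  rw [div_re, ← add_div, div_eq_iff hden, normSq_apply]
  simp only [sub_re, sub_im, one_re, one_im]
  linear_combination -hsq / 2

theorem IsPrimitiveRoot.re_pow_div_one_sub_pow {ζ : ℂ} {n k : ℕ} (hζ : IsPrimitiveRoot ζ n)
    (hn : n ≠ 0) (hk : ¬ n ∣ k) : (ζ ^ k / (1 - ζ ^ k)).re = -1 / 2 :=
  re_div_one_sub_of_norm_eq_one (by rw [norm_pow, hζ.norm'_eq_one hn, one_pow])
    (mt (hζ.pow_eq_one_iff_dvd k).1 hk)

lemma exp_two_pi_mul_I_div_eight :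
    exp (2 * Real.pi * I / 8) = (Real.sqrt 2 / 2 : ℝ) * (1 + I) := by
  rw [show 2 * (Real.pi : ℂ) * I / 8 = (Real.pi / 4 : ℝ) * I by push_cast; ring, exp_mul_I,
    ← ofReal_cos, ← ofReal_sin, Real.cos_pi_div_four, Real.sin_pi_div_four]
  ring

lemma one_add_add_sq_add_pow_three_of_eq {ζ : ℂ} (hζ : ζ = (Real.sqrt 2 / 2 : ℝ) * (1 + I)) :
    1 + ζ + ζ ^ 2 + ζ ^ 3 = 1 + (1 + Real.sqrt 2) * I := by
  have hs : ((Real.sqrt 2 : ℝ) : ℂ) ^ 2 = 2 := by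
    exact_mod_cast Real.sq_sqrt zero_le_two
  have hζ2 : ζ ^ 2 = I := by
    rw [hζ]; push_cast
    linear_combination (I / 2) * hs + (Real.sqrt 2 ^ 2 / 4 : ℂ) * I_sq
  calc 1 + ζ + ζ ^ 2 + ζ ^ 3 = 1 + I + (1 + I) * ζ := by linear_combination (1 + ζ) * hζ2
    _ = 1 + (1 + Real.sqrt 2) * I := by
      rw [hζ]; push_cast; linear_combination (Real.sqrt 2 / 2 : ℂ) * I_sq

theorem no_eichler_solution_order_eight :
    ¬ ∃ f₁ f₃ f₅ f₇ : ℕ,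
      letI ζ : ℂ := Complex.exp (2 * Real.pi * Complex.I / 8)
      (1 + ζ + ζ ^ 2 + ζ ^ 3 : ℂ) =
        1 + (f₁ : ℂ) * (ζ / (1 - ζ)) + (f₃ : ℂ) * (ζ ^ 3 / (1 - ζ ^ 3))
          + (f₅ : ℂ) * (ζ ^ 5 / (1 - ζ ^ 5)) + (f₇ : ℂ) * (ζ ^ 7 / (1 - ζ ^ 7)) := by
  rintro ⟨f₁, f₃, f₅, f₇, h⟩
  have hζ := isPrimitiveRoot_exp 8 (by norm_num)
  rw [Nat.cast_ofNat] at hζ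
  set ζ : ℂ := exp (2 * Real.pi * I / 8)
  have hfrac (k : ℕ) (hk : ¬ 8 ∣ k) := hζ.re_pow_div_one_sub_pow (by norm_num) hk
  have hf₁ : (ζ / (1 - ζ)).re = -1 / 2 := by simpa using hfrac 1 (by norm_num)
  rw [one_add_add_sq_add_pow_three_of_eq exp_two_pi_mul_I_div_eight] at h
  have hre := congrArg re h
  simp only [add_re, one_re, mul_re, ofReal_re, I_re, I_im, natCast_re, natCast_im, add_im,
    one_im, ofReal_im, hf₁, hfrac 3 (by norm_num), hfrac 5 (by norm_num),
    hfrac 7 (by norm_num)] at hre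
  have hzero : f₁ + f₃ + f₅ + f₇ = 0 := by
    exact_mod_cast (by linarith : (f₁ + f₃ + f₅ + f₇ : ℝ) = 0)
  obtain ⟨rfl, rfl, rfl, rfl⟩ : f₁ = 0 ∧ f₃ = 0 ∧ f₅ = 0 ∧ f₇ = 0 := by omega
  have him : (1 + Real.sqrt 2 : ℂ) * I = 0 := by simpa using h
  have hne : (1 + Real.sqrt 2 : ℂ) ≠ 0 := by
    exact_mod_cast (by positivity : 1 + Real.sqrt 2 ≠ 0)
  exact mul_ne_zero hne I_ne_zero him
end

section
/- Let ζ = exp(2πi/7) ∈ ℂ. There exist natural numbers f₁, …, f₆ such that ζ + ζ² + ζ³ = 1 + ∑_{u=1}^{6} f_u · ζ^u/(1 − ζ^u). -/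
/-!
Take f = (2, 0, 1, 0, 0, 0). After multiplying by (1 - ζ)(1 - ζ³), both sides of the identity
become 1 + ζ - 2ζ⁴ once ζ⁷ = 1 is used; the denominators are nonzero because ζ and ζ³ are
nontrivial 7th roots of unity.
-/

theorem IsPrimitiveRoot.add_sq_add_cube_eq_of_seven {K : Type*} [Field K] {ζ : K}
    (hζ : IsPrimitiveRoot ζ 7) :
    ζ + ζ ^ 2 + ζ ^ 3 = 1 + 2 * (ζ / (1 - ζ)) + ζ ^ 3 / (1 - ζ ^ 3) := by
  have h1 : 1 - ζ ≠ 0 := sub_ne_zero.2 (hζ.ne_one (by norm_num)).symm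
  have h3 : 1 - ζ ^ 3 ≠ 0 :=
    sub_ne_zero.2 (hζ.pow_ne_one_of_pos_of_lt three_ne_zero (by norm_num)).symm
  field_simp
  linear_combination hζ.pow_eq_one

theorem eichler_solution_order_seven :
    ∃ f₁ f₂ f₃ f₄ f₅ f₆ : ℕ,
      letI ζ : ℂ := Complex.exp (2 * Real.pi * Complex.I / 7)
      (ζ + ζ ^ 2 + ζ ^ 3 : ℂ) =
        1 + (f₁ : ℂ) * (ζ / (1 - ζ)) + (f₂ : ℂ) * (ζ ^ 2 / (1 - ζ ^ 2))
          + (f₃ : ℂ) * (ζ ^ 3 / (1 - ζ ^ 3)) + (f₄ : ℂ) * (ζ ^ 4 / (1 - ζ ^ 4))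
          + (f₅ : ℂ) * (ζ ^ 5 / (1 - ζ ^ 5)) + (f₆ : ℂ) * (ζ ^ 6 / (1 - ζ ^ 6)) := by
  refine ⟨2, 0, 1, 0, 0, 0, ?_⟩
  have hζ : IsPrimitiveRoot (Complex.exp (2 * Real.pi * Complex.I / 7)) 7 := by
    simpa using Complex.isPrimitiveRoot_exp 7 (by norm_num)
  simpa using hζ.add_sq_add_cube_eq_of_seven
end

section
/- Let ζ = exp(2πi/12) ∈ ℂ. There do not exist natural numbers f₁, f₅, f₇, f₁₁ such that ζ² + ζ³ + ζ⁴ = 1 + f₁·ζ/(1 − ζ) + f₅·ζ⁵/(1 − ζ⁵) + f₇·ζ⁷/(1 − ζ⁷) + f₁₁·ζ¹¹/(1 − ζ¹¹). -/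
theorem no_eichler_solution_order_twelve :
    ¬ ∃ f₁ f₅ f₇ f₁₁ : ℕ,
      letI ζ : ℂ := Complex.exp (2 * Real.pi * Complex.I / 12)
      (ζ ^ 2 + ζ ^ 3 + ζ ^ 4 : ℂ) =
        1 + (f₁ : ℂ) * (ζ / (1 - ζ)) + (f₅ : ℂ) * (ζ ^ 5 / (1 - ζ ^ 5))
          + (f₇ : ℂ) * (ζ ^ 7 / (1 - ζ ^ 7)) + (f₁₁ : ℂ) * (ζ ^ 11 / (1 - ζ ^ 11)) := by
  rintro ⟨f₁, f₅, f₇, f₁₁, h⟩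
  set s : ℝ := Real.sqrt 3 with hsdef
  have hs : s ^ 2 = 3 := Real.sq_sqrt (by norm_num)
  have hs_nonneg : 0 ≤ s := Real.sqrt_nonneg 3
  have hs1 : 1 < s := by nlinarith
  have hs2 : s < 2 := by nlinarith
  have hs3 : (s : ℂ) ^ 2 = 3 := by
    rw [← Complex.ofReal_pow, hs]; norm_num
  -- the explicit value of ζ
  have hζ : Complex.exp (2 * Real.pi * Complex.I / 12) = ((s : ℂ) + Complex.I) / 2 := by
    have harg : (2 * (Real.pi : ℂ) * Complex.I / 12) = ((Real.pi / 6 : ℝ) : ℂ) * Complex.I := by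
      push_cast; ring
    rw [harg, Complex.exp_mul_I, ← Complex.ofReal_cos, ← Complex.ofReal_sin,
      Real.cos_pi_div_six, Real.sin_pi_div_six]
    push_cast; ring
  rw [hζ] at h
  set z : ℂ := ((s : ℂ) + Complex.I) / 2 with hz
  -- powers of z
  have p2 : z ^ 2 = (1 + (s : ℂ) * Complex.I) / 2 := by
    rw [hz]
    linear_combination ((1:ℂ)/4) * hs3 + ((1:ℂ)/4) * Complex.I_sq
  have p3 : z ^ 3 = Complex.I := by
    rw [hz]
    linear_combination ((3/8 : ℂ)*Complex.I + (1/8 : ℂ)*(s:ℂ)) * hs3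
      + ((1/8 : ℂ)*Complex.I + (3/8 : ℂ)*(s:ℂ)) * Complex.I_sq
  have p4 : z ^ 4 = (-1 + (s : ℂ) * Complex.I) / 2 := by
    rw [show (4:ℕ) = 2 * 2 from rfl, pow_mul, p2]
    linear_combination ((1/4 : ℂ)*Complex.I^2) * hs3 + ((3/4 : ℂ)) * Complex.I_sq
  have p5 : z ^ 5 = (-(s : ℂ) + Complex.I) / 2 := by
    rw [show (5:ℕ) = 2 + 3 from rfl, pow_add, p2, p3]
    linear_combination ((1/2 : ℂ)*(s:ℂ)) * Complex.I_sq
  have p7 : z ^ 7 = (-(s : ℂ) - Complex.I) / 2 := by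
    rw [show (7:ℕ) = 4 + 3 from rfl, pow_add, p4, p3]
    linear_combination ((1/2 : ℂ)*(s:ℂ)) * Complex.I_sq
  have p11 : z ^ 11 = ((s : ℂ) - Complex.I) / 2 := by
    rw [show (11:ℕ) = 4 + 4 + 3 from rfl, pow_add, pow_add, p4, p3]
    linear_combination ((1/4 : ℂ)*Complex.I^3) * hs3
      + ((3/4 : ℂ)*Complex.I + (-1/2 : ℂ)*(s:ℂ)) * Complex.I_sq
  -- nonvanishing denominators
  have d1 : (1 : ℂ) - z ≠ 0 := by
    rw [hz]; intro H
    have := congrArg Complex.im H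
    simp [Complex.div_im] at this
  have d5 : (1 : ℂ) - (-(s : ℂ) + Complex.I) / 2 ≠ 0 := by
    intro H
    have := congrArg Complex.im H
    simp [Complex.div_im] at this
  have d7 : (1 : ℂ) - (-(s : ℂ) - Complex.I) / 2 ≠ 0 := by
    intro H
    have := congrArg Complex.im H
    simp [Complex.div_im] at this
  have d11 : (1 : ℂ) - ((s : ℂ) - Complex.I) / 2 ≠ 0 := by
    intro H
    have := congrArg Complex.im H
    simp [Complex.div_im] at this
  -- the four fractions
  have e1 : z / (1 - z) = (-1 + ((2 : ℂ) + s) * Complex.I) / 2 := by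
    rw [div_eq_iff d1, hz]
    linear_combination ((1/4 : ℂ)*Complex.I) * hs3 + ((1/2 : ℂ) + (1/4 : ℂ)*(s:ℂ)) * Complex.I_sq
  have e5 : z ^ 5 / (1 - z ^ 5) = (-1 + ((2 : ℂ) - s) * Complex.I) / 2 := by
    rw [p5, div_eq_iff d5]
    linear_combination ((1/4 : ℂ)*Complex.I) * hs3 + ((1/2 : ℂ) + (-1/4 : ℂ)*(s:ℂ)) * Complex.I_sq
  have e7 : z ^ 7 / (1 - z ^ 7) = (-1 - ((2 : ℂ) - s) * Complex.I) / 2 := by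
    rw [p7, div_eq_iff d7]
    linear_combination ((-1/4 : ℂ)*Complex.I) * hs3 + ((1/2 : ℂ) + (-1/4 : ℂ)*(s:ℂ)) * Complex.I_sq
  have e11 : z ^ 11 / (1 - z ^ 11) = (-1 - ((2 : ℂ) + s) * Complex.I) / 2 := by
    rw [p11, div_eq_iff d11]
    linear_combination ((-1/4 : ℂ)*Complex.I) * hs3 + ((1/2 : ℂ) + (1/4 : ℂ)*(s:ℂ)) * Complex.I_sq
  rw [p2, p3, p4, e1, e5, e7, e11] at h
  clear hζ p2 p3 p4 p5 p7 p11 d1 d5 d7 d11 e1 e5 e7 e11 hz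
  clear_value z
  clear z
  have h2' : (1 + (s:ℂ) * Complex.I) + 2 * Complex.I + (-1 + (s:ℂ) * Complex.I)
      = 2 + (f₁ : ℂ) * (-1 + ((2:ℂ) + s) * Complex.I) + (f₅ : ℂ) * (-1 + ((2:ℂ) - s) * Complex.I)
        + (f₇ : ℂ) * (-1 - ((2:ℂ) - s) * Complex.I)
        + (f₁₁ : ℂ) * (-1 - ((2:ℂ) + s) * Complex.I) := by
    linear_combination 2 * h
  clear h
  have hre := congrArg Complex.re h2'
  have him := congrArg Complex.im h2'
  simp only [Complex.add_re, Complex.add_im, Complex.mul_re, Complex.mul_im,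
    Complex.I_re, Complex.I_im, Complex.ofReal_re,
    Complex.ofReal_im, Complex.natCast_re, Complex.natCast_im, Complex.one_re, Complex.one_im,
    Complex.sub_re, Complex.sub_im, Complex.neg_re, Complex.neg_im,
    Complex.re_ofNat, Complex.im_ofNat] at hre him
  ring_nf at hre him
  have hsum : f₁ + f₅ + f₇ + f₁₁ = 2 := by
    have : (f₁ : ℝ) + f₅ + f₇ + f₁₁ = 2 := by linarith
    exact_mod_cast this
  have hb1 : f₁ ≤ 2 := by omega
  have hb5 : f₅ ≤ 2 := by omega
  have hb7 : f₇ ≤ 2 := by omega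
  have hb11 : f₁₁ ≤ 2 := by omega
  interval_cases f₁ <;> interval_cases f₅ <;> interval_cases f₇ <;> interval_cases f₁₁ <;>
    first
    | omega
    | (push_cast at him; linarith)
end
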